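/- In the dynamic network creation game in which players' communication cost uses the temporal shortest distance, for every real atomic cost α with 1 ≤ α < 2 and every integer n ≥ 4, every Nash equilibrium on n players has social cost at most 2n(n−1) + (α−2)(2n−4). -/

import Mathlib

open scoped ENNReal BigOperators

/-- A temporal path from `u` to `v`, given as a list of steps `(next vertex, time label)`.
The labelling `lab` gives, for each (ordered) pair of vertices, the set of time labels of the
edge joining them (empty if there is no edge); it is symmetric for temporal graphs arising
from strategy profiles.  The conditions say that consecutive steps use time labels belonging
to the corresponding edge, that time labels strictly increase along the path, that no vertex is
repeated, and that the path ends at `v`. -/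
def IsTemporalPath {V : Type*} (lab : V → V → Set ℕ) (u v : V) (p : List (V × ℕ)) : Prop :=
  List.Chain (fun a b => b.2 ∈ lab a.1 b.1) (u, 0) p ∧
  List.Chain' (· < ·) (p.map Prod.snd) ∧
  (u :: p.map Prod.fst).Nodup ∧
  (u :: p.map Prod.fst).getLast (List.cons_ne_nil _ _) = v

/-- The temporal shortest distance from `u` to `v`: the least number of edges of a temporal
path from `u` to `v` (`0` if `u = v`, `⊤` if there is no temporal path). -/
noncomputable def temporalDist {V : Type*} (lab : V → V → Set ℕ) (u v : V) : ℕ∞ :=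
  sInf {n : ℕ∞ | ∃ p : List (V × ℕ), IsTemporalPath lab u v p ∧ (p.length : ℕ∞) = n}

/-- The labelling of the communication temporal graph `𝒢[s]` of a strategy profile `s`:
`t` is a label of the edge `uv` iff `(u, t) ∈ s v` or `(v, t) ∈ s u`. -/
def profLab {V : Type*} (s : V → Finset (V × ℕ)) : V → V → Set ℕ :=
  fun u v => {t | (u, t) ∈ s v ∨ (v, t) ∈ s u}

/-- The (finite) set of time labels of the edge `uv` in the communication temporal graph. -/
def labelFinset {V : Type*} [DecidableEq V] (s : V → Finset (V × ℕ)) (u v : V) : Finset ℕ :=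
  (((s v).filter (fun p => p.1 = u)).image Prod.snd) ∪
    (((s u).filter (fun p => p.1 = v)).image Prod.snd)

/-- The total number of time labels `∑ e ∈ E, |λ(e)|` of the communication temporal graph
(each unordered pair is counted once, whence the division by `2`). -/
def numLabels {V : Type*} [Fintype V] [DecidableEq V] (s : V → Finset (V × ℕ)) : ℕ :=
  (∑ u : V, ∑ v : V, if u = v then 0 else (labelFinset s u v).card) / 2

/-- The number of edges `|E|` of the communication temporal graph. -/
def numEdges {V : Type*} [Fintype V] [DecidableEq V] (s : V → Finset (V × ℕ)) : ℕ :=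
  ((Finset.univ : Finset (V × V)).filter
    (fun q => q.1 ≠ q.2 ∧ (labelFinset s q.1 q.2).Nonempty)).card / 2

/-- The social cost `c[s] = α·∑_{e ∈ E} |λ(e)| + ∑_{(u,v) ∈ V×V} d_{𝒢[s]}(u,v)`
of a strategy profile `s` for atomic cost `α`. -/
noncomputable def socialCost {V : Type*} [Fintype V] [DecidableEq V]
    (α : ℝ) (s : V → Finset (V × ℕ)) : ℝ≥0∞ :=
  ENNReal.ofReal α * (numLabels s : ℝ≥0∞) +
    ∑ u : V, ∑ v : V, (temporalDist (profLab s) u v : ℝ≥0∞)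

/-- The individual cost `c[s](v) = α·|s(v)| + ∑_{w ∈ V} d_{𝒢[s]}(v,w)` of player `v`. -/
noncomputable def indivCost {V : Type*} [Fintype V]
    (α : ℝ) (s : V → Finset (V × ℕ)) (v : V) : ℝ≥0∞ :=
  ENNReal.ofReal α * ((s v).card : ℝ≥0∞) +
    ∑ w : V, (temporalDist (profLab s) v w : ℝ≥0∞)

/-- A strategy profile is a Nash equilibrium if no player can strictly decrease its individual
cost by changing only its own strategy. -/
def IsNash {V : Type*} [Fintype V] [DecidableEq V] (α : ℝ) (s : V → Finset (V × ℕ)) : Prop :=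
  ∀ (v : V) (t : Finset (V × ℕ)),
    ¬ indivCost α (Function.update s v t) v < indivCost α s v

/-- The optimal social cost `c*(α, n)`: the minimum social cost over all strategy profiles
with `n` players and atomic cost `α`. -/
noncomputable def optCost (α : ℝ) (n : ℕ) : ℝ≥0∞ :=
  ⨅ s : Fin n → Finset (Fin n × ℕ), socialCost α s

/-- The price of anarchy `PoA(α, n)`: the maximum social cost of a Nash equilibrium with `n`
players and atomic cost `α`, divided by the optimal social cost `c*(α, n)`. -/
noncomputable def PoA (α : ℝ) (n : ℕ) : ℝ≥0∞ :=
  (⨆ s : {s : Fin n → Finset (Fin n × ℕ) // IsNash α s}, socialCost α s.1) / optCost α n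

/-- The price of stability `PoS(α, n)`: the minimum social cost of a Nash equilibrium with `n`
players and atomic cost `α`, divided by the optimal social cost `c*(α, n)`. -/
noncomputable def PoS (α : ℝ) (n : ℕ) : ℝ≥0∞ :=
  (⨅ s : {s : Fin n → Finset (Fin n × ℕ) // IsNash α s}, socialCost α s.1) / optCost α n

/-!
In an equilibrium with `0 < α < 2` every temporal distance is at most `2`: otherwise buying an
edge at time `0` to every vertex at distance `≥ 3` costs `α + 1 < 3` per such vertex. Every edge
carries a single label: a player never buys a label on an edge that has an earlier one, since
dropping it lengthens no temporal path. Hence the social cost is `α |E| + ∑ (2 - [u ~ v])`,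
that is `2n(n-1) + (α - 2)|E|`, and it remains to show `|E| ≥ 2n - 4`. Two distinct non-adjacent
vertices `u`, `v` are joined by increasing temporal paths `u → w → v` and `v → w' → u`, and
`w = w'` would force the single labels of `uw` and `wv` to increase in both directions; so `u`
and `v` have two common neighbours, and counting degrees around a vertex of minimum degree gives
the bound on `|E|`.
-/

section TemporalPath

variable {V : Type*} {lab lab' : V → V → Set ℕ} {u v : V}

theorem temporalDist_le_length {p : List (V × ℕ)} (hp : IsTemporalPath lab u v p) :
    temporalDist lab u v ≤ p.length :=
  sInf_le ⟨p, hp, rfl⟩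

theorem exists_isTemporalPath_of_temporalDist_lt {k : ℕ∞} (h : temporalDist lab u v < k) :
    ∃ p, IsTemporalPath lab u v p ∧ (p.length : ℕ∞) < k := by
  obtain ⟨_, ⟨p, hp, rfl⟩, hlt⟩ := sInf_lt_iff.mp h
  exact ⟨p, hp, hlt⟩

theorem isTemporalPath_iff {p : List (V × ℕ)} :
    IsTemporalPath lab u v p ↔
      List.IsChain (fun a b => b.2 ∈ lab a.1 b.1) ((u, 0) :: p) ∧
        List.IsChain (· < ·) (p.map Prod.snd) ∧ (u :: p.map Prod.fst).Nodup ∧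
        (u :: p.map Prod.fst).getLast (List.cons_ne_nil _ _) = v :=
  Iff.rfl

theorem isTemporalPath_nil_iff : IsTemporalPath lab u v [] ↔ u = v := by
  simp [isTemporalPath_iff]

theorem isTemporalPath_singleton_iff {w : V} {t : ℕ} :
    IsTemporalPath lab u v [(w, t)] ↔ t ∈ lab u w ∧ u ≠ w ∧ w = v := by
  simp [isTemporalPath_iff]

theorem isTemporalPath_pair_iff {w x : V} {t₁ t₂ : ℕ} :
    IsTemporalPath lab u v [(w, t₁), (x, t₂)] ↔
      (t₁ ∈ lab u w ∧ t₂ ∈ lab w x) ∧ t₁ < t₂ ∧ (u ≠ w ∧ u ≠ x ∧ w ≠ x) ∧ x = v := by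
  simp [isTemporalPath_iff, and_assoc]

theorem temporalDist_self (v : V) : temporalDist lab v v = 0 :=
  nonpos_iff_eq_zero.mp (temporalDist_le_length (isTemporalPath_nil_iff.mpr rfl))

theorem temporalDist_le_one {t : ℕ} (huv : u ≠ v) (ht : t ∈ lab u v) :
    temporalDist lab u v ≤ 1 :=
  temporalDist_le_length (isTemporalPath_singleton_iff.mpr ⟨ht, huv, rfl⟩)

theorem one_le_temporalDist (huv : u ≠ v) : 1 ≤ temporalDist lab u v := by
  refine le_sInf ?_
  rintro _ ⟨_ | ⟨a, p⟩, hp, rfl⟩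
  · exact absurd (isTemporalPath_nil_iff.mp hp) huv
  · simp

theorem nonempty_of_temporalDist_lt_two (huv : u ≠ v) (h : temporalDist lab u v < 2) :
    (lab u v).Nonempty := by
  obtain ⟨p, hp, hlen⟩ := exists_isTemporalPath_of_temporalDist_lt h
  rcases p with _ | ⟨⟨w, t⟩, _ | ⟨a, p⟩⟩
  · exact absurd (isTemporalPath_nil_iff.mp hp) huv
  · obtain ⟨ht, -, rfl⟩ := isTemporalPath_singleton_iff.mp hp
    exact ⟨t, ht⟩
  · norm_cast at hlen

theorem exists_increasing_wedge_of_temporalDist_lt_three (huv : u ≠ v)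
    (hno : ¬ (lab u v).Nonempty) (h : temporalDist lab u v < 3) :
    ∃ w t₁ t₂, u ≠ w ∧ w ≠ v ∧ t₁ ∈ lab u w ∧ t₂ ∈ lab w v ∧ t₁ < t₂ := by
  obtain ⟨p, hp, hlen⟩ := exists_isTemporalPath_of_temporalDist_lt h
  rcases p with _ | ⟨⟨w, t₁⟩, _ | ⟨⟨x, t₂⟩, _ | ⟨a, p⟩⟩⟩
  · exact absurd (isTemporalPath_nil_iff.mp hp) huv
  · obtain ⟨ht, -, rfl⟩ := isTemporalPath_singleton_iff.mp hp
    exact absurd ⟨t₁, ht⟩ hno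
  · obtain ⟨⟨ht₁, ht₂⟩, hlt, ⟨huw, -, hwx⟩, rfl⟩ := isTemporalPath_pair_iff.mp hp
    exact ⟨w, t₁, t₂, huw, hwx, ht₁, ht₂, hlt⟩
  · norm_cast at hlen

/-- A temporal path from `v` never returns to `v`, so only its first step uses an edge at `v`. -/
theorem temporalDist_le_of_forall_exists_le
    (hrest : ∀ x y, x ≠ v → y ≠ v → lab x y ⊆ lab' x y)
    (hfirst : ∀ x, x ≠ v → ∀ t ∈ lab v x, ∃ t' ∈ lab' v x, t' ≤ t) (w : V) :
    temporalDist lab' v w ≤ temporalDist lab v w := by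
  refine le_sInf ?_
  rintro _ ⟨_ | ⟨⟨x, t⟩, p⟩, hp, rfl⟩
  · exact temporalDist_le_length (isTemporalPath_nil_iff.mpr (isTemporalPath_nil_iff.mp hp))
  obtain ⟨hchain, hmono, hnodup, hlast⟩ := hp
  have hv : ∀ a ∈ (x, t) :: p, a.1 ≠ v := by
    intro a ha hav
    refine (List.nodup_cons.mp hnodup).1 ?_
    rw [← hav]
    exact List.mem_map_of_mem ha
  obtain ⟨hxt, hchain⟩ := List.isChain_cons_cons.mp hchain
  obtain ⟨t', ht', ht't⟩ := hfirst x (hv _ List.mem_cons_self) t hxt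
  refine temporalDist_le_length (p := (x, t') :: p) ⟨?_, ?_, hnodup, hlast⟩
  · refine List.isChain_cons_cons.mpr ⟨ht', ?_⟩
    exact (hchain.imp_of_mem_imp fun a b ha hb hab => hrest _ _ (hv a ha) (hv b hb) hab).imp_head
      (x := (x, t)) (y := (x, t')) id
  · exact hmono.imp_head ht't.trans_lt

end TemporalPath

section Profile

variable {V : Type*} {s : V → Finset (V × ℕ)}

theorem mem_labelFinset [DecidableEq V] {u v : V} {t : ℕ} :
    t ∈ labelFinset s u v ↔ t ∈ profLab s u v := by
  simp [labelFinset, profLab]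

theorem profLab_comm (s : V → Finset (V × ℕ)) (u v : V) : profLab s u v = profLab s v u :=
  Set.ext fun _ => or_comm

theorem profLab_update_of_ne [DecidableEq V] {t : Finset (V × ℕ)} {v x y : V} (hx : x ≠ v)
    (hy : y ≠ v) : profLab (Function.update s v t) x y = profLab s x y := by
  simp only [profLab, Function.update_of_ne hx, Function.update_of_ne hy]

theorem mem_profLab_update_self [DecidableEq V] {t : Finset (V × ℕ)} {v x : V} {τ : ℕ}
    (hx : x ≠ v) : τ ∈ profLab (Function.update s v t) v x ↔ (v, τ) ∈ s x ∨ (x, τ) ∈ t := by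
  simp [profLab, Function.update_of_ne hx]

/-- The underlying graph `(V, E)` of the communication temporal graph `𝒢[s]`. -/
def profileGraph (s : V → Finset (V × ℕ)) : SimpleGraph V where
  Adj u v := u ≠ v ∧ (profLab s u v).Nonempty
  symm := ⟨fun u v h => ⟨h.1.symm, profLab_comm s u v ▸ h.2⟩⟩
  loopless := ⟨fun _ h => h.1 rfl⟩

end Profile

namespace SimpleGraph

open Finset

variable {V : Type*} [Fintype V] [DecidableEq V] (G : SimpleGraph V) [DecidableRel G.Adj]

theorem sum_ite_adj_add_degree (u : V) :
    ∑ v, (if u = v then 0 else if G.Adj u v then 1 else 2 : ℕ) + G.degree u =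
      2 * (Fintype.card V - 1) := by
  rw [← card_neighborFinset_eq_degree, neighborFinset_eq_filter, card_filter, ← sum_add_distrib]
  calc ∑ v, ((if u = v then 0 else if G.Adj u v then 1 else 2 : ℕ) + if G.Adj u v then 1 else 0)
      = ∑ v, (if u = v then 0 else 2 : ℕ) := by
        refine sum_congr rfl fun v _ => ?_
        by_cases huv : u = v
        · simp [huv]
        · by_cases hadj : G.Adj u v <;> simp [huv, hadj]
    _ = 2 * (Fintype.card V - 1) := by
        rw [sum_ite, sum_const_zero, sum_const, filter_ne, card_erase_of_mem (mem_univ u),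
          card_univ, smul_eq_mul, zero_add, mul_comm]

theorem degree_add_two_mul_le_sum_degree
    (h : ∀ u v, u ≠ v → ¬ G.Adj u v → 2 ≤ #(G.neighborFinset u ∩ G.neighborFinset v)) (v : V) :
    G.degree v + 2 * (Fintype.card V - G.degree v - 1) ≤
      ∑ y ∈ G.neighborFinset v, G.degree y := by
  set Y := G.neighborFinset v
  have hvY : v ∈ Yᶜ := by simp [Y]
  have hout : ∀ z ∈ Yᶜ.erase v, 2 ≤ #(Y.filter (G.Adj z)) := by
    intro z hz
    obtain ⟨hzv, hz⟩ := mem_erase.mp hz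
    refine (h z v hzv (by simpa [Y, G.adj_comm] using hz)).trans (card_le_card fun y hy => ?_)
    simp only [mem_inter, mem_neighborFinset] at hy
    simpa [Y] using hy.symm
  calc G.degree v + 2 * (Fintype.card V - G.degree v - 1)
        = #(Y.filter (G.Adj v)) + ∑ _z ∈ Yᶜ.erase v, 2 := by
        rw [filter_true_of_mem fun y hy => (G.mem_neighborFinset v y).mp hy, sum_const,
          card_erase_of_mem hvY, card_compl, card_neighborFinset_eq_degree, smul_eq_mul, mul_comm]
    _ ≤ ∑ z ∈ Yᶜ, #(Y.filter (G.Adj z)) := by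
        rw [← add_sum_erase _ _ hvY]
        exact add_le_add le_rfl (sum_le_sum hout)
    _ = ∑ y ∈ Y, #(Yᶜ.filter (G.Adj · y)) :=
        sum_card_bipartiteAbove_eq_sum_card_bipartiteBelow G.Adj
    _ ≤ ∑ y ∈ Y, G.degree y := sum_le_sum fun y _ => by
        rw [← card_neighborFinset_eq_degree]
        exact card_le_card fun z hz => by simpa [G.adj_comm] using (mem_filter.mp hz).2

theorem card_le_degree_add_one_or_two_le_degree
    (h : ∀ u v, u ≠ v → ¬ G.Adj u v → 2 ≤ #(G.neighborFinset u ∩ G.neighborFinset v)) (v : V) :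
    Fintype.card V ≤ G.degree v + 1 ∨ 2 ≤ G.degree v := by
  by_contra! hv
  obtain ⟨u, hu⟩ : ((G.neighborFinset v)ᶜ.erase v).Nonempty := by
    rw [← card_pos, card_erase_of_mem (by simp), card_compl, card_neighborFinset_eq_degree]
    omega
  obtain ⟨huv, hu⟩ := mem_erase.mp hu
  have := (h u v huv (by simpa [G.adj_comm] using hu)).trans
    ((card_le_card inter_subset_right).trans (G.card_neighborFinset_eq_degree v).le)
  omega

/-- With `v` of minimum degree `δ`, summing degrees inside and outside `N(v)` gives
`2|E| ≥ δ + 2(n - δ - 1) + δ(n - δ)`; together with `2|E| ≥ δn` and `δ ≥ 2` (unless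
`n ≤ δ + 1`) this suffices. -/
theorem two_mul_card_le_card_edgeFinset_add_four
    (h : ∀ u v, u ≠ v → ¬ G.Adj u v → 2 ≤ #(G.neighborFinset u ∩ G.neighborFinset v)) :
    2 * Fintype.card V ≤ #G.edgeFinset + 4 := by
  rcases isEmpty_or_nonempty V with hV | hV
  · simp
  obtain ⟨v, hv⟩ := G.exists_minimal_degree_vertex
  have hmin : ∀ S : Finset V, #S * G.degree v ≤ ∑ z ∈ S, G.degree z := fun S =>
    hv ▸ card_nsmul_le_sum S _ _ fun z _ => G.minDegree_le_degree z
  have hsplit := sum_add_sum_compl (G.neighborFinset v) (G.degree ·)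
  rw [sum_degrees_eq_twice_card_edges] at hsplit
  have hN := G.degree_add_two_mul_le_sum_degree h v
  have hNc := hmin (G.neighborFinset v)ᶜ
  have hall := hmin univ
  have hδ := G.card_le_degree_add_one_or_two_le_degree h v
  rw [card_compl, card_neighborFinset_eq_degree] at hNc
  rw [card_univ, sum_degrees_eq_twice_card_edges] at hall
  obtain ⟨c, hc⟩ : ∃ c, Fintype.card V = G.degree v + 1 + c :=
    ⟨_, (Nat.add_sub_of_le (G.degree_lt_card_verts v)).symm⟩
  rw [hc, show G.degree v + 1 + c - G.degree v - 1 = c by omega] at hN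
  rw [hc, show G.degree v + 1 + c - G.degree v = c + 1 by omega] at hNc
  rw [hc] at hall hδ ⊢
  rcases hδ with hc0 | hδ
  · obtain rfl : c = 0 := by omega
    nlinarith
  · obtain hδ | hδ | hδ : G.degree v = 2 ∨ G.degree v = 3 ∨ 4 ≤ G.degree v := by omega
    · rw [hδ] at hN hNc; omega
    · rw [hδ] at hN hNc hall; omega
    · nlinarith

end SimpleGraph

section Nash

open Finset SimpleGraph

variable {V : Type*} [Fintype V] [DecidableEq V] {α : ℝ} {s : V → Finset (V × ℕ)}

theorem indivCost_update_union_le {v : V} {F : Finset V} (hvF : v ∉ F) :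
    indivCost α (Function.update s v (s v ∪ F ×ˢ {0})) v ≤
      ENNReal.ofReal α * (#(s v) + #F) +
        (#F + ∑ x ∈ Fᶜ, (temporalDist (profLab s) v x : ℝ≥0∞)) := by
  set s' := Function.update s v (s v ∪ F ×ˢ {0})
  have hcard : (#(s' v) : ℝ≥0∞) ≤ #(s v) + #F := by
    simp only [s', Function.update_self]
    exact_mod_cast (card_union_le _ _).trans (by simp)
  have hle : ∀ x, temporalDist (profLab s') v x ≤ temporalDist (profLab s) v x :=
    temporalDist_le_of_forall_exists_le (fun x y hx hy => (profLab_update_of_ne hx hy).ge)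
      fun x hx τ hτ => ⟨τ, (mem_profLab_update_self hx).mpr (hτ.imp id (mem_union_left _)), le_rfl⟩
  have hF : ∀ x ∈ F, (temporalDist (profLab s') v x : ℝ≥0∞) ≤ 1 := by
    intro x hx
    have hxv : x ≠ v := by rintro rfl; exact hvF hx
    exact_mod_cast ENat.toENNReal_le.mpr <| temporalDist_le_one (t := 0) hxv.symm
      ((mem_profLab_update_self hxv).mpr (Or.inr (by simp [hx])))
  refine add_le_add (mul_le_mul_right hcard _) ?_
  rw [← sum_add_sum_compl F]
  refine add_le_add ?_ (sum_le_sum fun x _ => ENat.toENNReal_le.mpr (hle x))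
  exact (sum_le_sum hF).trans (by simp)

theorem IsNash.temporalDist_le_two (hα : α < 2) (hs : IsNash α s) (v w : V) :
    temporalDist (profLab s) v w ≤ 2 := by
  by_contra! hw
  set d := temporalDist (profLab s) v
  set F := univ.filter fun x => 2 < d x
  set C := ENNReal.ofReal α * #(s v) + ∑ x ∈ Fᶜ, (d x : ℝ≥0∞)
  have hvF : v ∉ F := by simp [F, d, temporalDist_self]
  have hC : C ≠ ⊤ := by
    refine ENNReal.add_ne_top.mpr ⟨ENNReal.mul_ne_top ENNReal.ofReal_ne_top (by simp),
      ENNReal.sum_ne_top.mpr fun x hx => ne_top_of_le_ne_top (b := ((2 : ℕ∞) : ℝ≥0∞)) (by simp)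
        (ENat.toENNReal_le.mpr (by simpa [F] using hx))⟩
  have hnew : indivCost α (Function.update s v (s v ∪ F ×ˢ {0})) v ≤
      C + (ENNReal.ofReal α + 1) * #F :=
    (indivCost_update_union_le hvF).trans_eq (by ring)
  have hold : C + 3 * #F ≤ indivCost α s v := by
    have h3 : ∑ _x ∈ F, (3 : ℝ≥0∞) ≤ ∑ x ∈ F, (d x : ℝ≥0∞) :=
      sum_le_sum fun x hx => by
        exact_mod_cast ENat.toENNReal_le.mpr (Order.add_one_le_of_lt (mem_filter.mp hx).2)
    rw [indivCost, ← sum_add_sum_compl F]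
    calc C + 3 * #F = ENNReal.ofReal α * #(s v) + (∑ _x ∈ F, (3 : ℝ≥0∞) +
          ∑ x ∈ Fᶜ, (d x : ℝ≥0∞)) := by simp only [C, sum_const, nsmul_eq_mul]; ring
      _ ≤ _ := by gcongr
  have hlt : (ENNReal.ofReal α + 1) * #F < 3 * #F := by
    have hα' : ENNReal.ofReal α < 2 := by
      simpa using (ENNReal.ofReal_lt_ofReal_iff two_pos).mpr hα
    have hF : (#F : ℝ≥0∞) ≠ 0 :=
      Nat.cast_ne_zero.mpr (card_ne_zero.mpr ⟨w, by simpa [F] using hw⟩)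
    refine ENNReal.mul_lt_mul_left hF (by simp) ?_
    calc ENNReal.ofReal α + 1 < 2 + 1 := ENNReal.add_lt_add_right ENNReal.one_ne_top hα'
      _ = 3 := by norm_num
  exact hs v _ (hnew.trans_lt ((ENNReal.add_lt_add_left hC hlt).trans_le hold))

theorem IsNash.sum_temporalDist_ne_top (hα : α < 2) (hs : IsNash α s) (v : V) :
    ∑ w, (temporalDist (profLab s) v w : ℝ≥0∞) ≠ ⊤ :=
  ENNReal.sum_ne_top.mpr fun w _ => ne_top_of_le_ne_top (b := ((2 : ℕ∞) : ℝ≥0∞)) (by simp)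
    (ENat.toENNReal_le.mpr (hs.temporalDist_le_two hα v w))

theorem IsNash.le_of_mem_of_mem_profLab (hα0 : 0 < α) (hα2 : α < 2) (hs : IsNash α s)
    {a b : V} {M t : ℕ} (hM : (b, M) ∈ s a) (ht : t ∈ profLab s a b) : M ≤ t := by
  by_contra! htM
  set s' := Function.update s a ((s a).erase (b, M))
  have hle : ∀ w, temporalDist (profLab s') a w ≤ temporalDist (profLab s) a w := by
    refine temporalDist_le_of_forall_exists_le (fun x y hx hy => (profLab_update_of_ne hx hy).ge)
      fun x hx τ hτ => ?_
    by_cases hxτ : (x, τ) = (b, M)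
    · obtain ⟨rfl, rfl⟩ := Prod.mk.inj hxτ
      refine ⟨t, (mem_profLab_update_self hx).mpr (ht.imp id fun h => ?_), htM.le⟩
      exact mem_erase.mpr ⟨by simp [htM.ne], h⟩
    · exact ⟨τ, (mem_profLab_update_self hx).mpr (hτ.imp id fun h => mem_erase.mpr ⟨hxτ, h⟩),
        le_rfl⟩
  set k := #((s a).erase (b, M))
  set S := ∑ w, (temporalDist (profLab s) a w : ℝ≥0∞)
  have hS : ENNReal.ofReal α * k + S ≠ ⊤ :=
    ENNReal.add_ne_top.mpr ⟨ENNReal.mul_ne_top ENNReal.ofReal_ne_top (by simp),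
      hs.sum_temporalDist_ne_top hα2 a⟩
  have hnew : indivCost α s' a ≤ ENNReal.ofReal α * k + S := by
    rw [indivCost, show s' a = (s a).erase (b, M) from Function.update_self ..]
    exact add_le_add le_rfl (sum_le_sum fun w _ => ENat.toENNReal_le.mpr (hle w))
  have hold : indivCost α s a = ENNReal.ofReal α * k + S + ENNReal.ofReal α := by
    rw [indivCost, ← card_erase_add_one hM, Nat.cast_add_one]
    ring
  refine hs a _ (hnew.trans_lt ?_)
  rw [hold]
  exact ENNReal.lt_add_right hS (ENNReal.ofReal_pos.mpr hα0).ne'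

theorem IsNash.card_labelFinset_le_one (hα0 : 0 < α) (hα2 : α < 2) (hs : IsNash α s) (u v : V) :
    #(labelFinset s u v) ≤ 1 := by
  have key : ∀ t ∈ labelFinset s u v, ∀ t' ∈ labelFinset s u v, t ≤ t' := by
    intro t ht t' ht'
    rw [mem_labelFinset] at ht ht'
    rcases ht with ht | ht
    · exact hs.le_of_mem_of_mem_profLab hα0 hα2 ht (profLab_comm s u v ▸ ht')
    · exact hs.le_of_mem_of_mem_profLab hα0 hα2 ht ht'
  exact card_le_one.mpr fun t ht t' ht' => (key t ht t' ht').antisymm (key t' ht' t ht)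

theorem IsNash.subsingleton_profLab (hα0 : 0 < α) (hα2 : α < 2) (hs : IsNash α s) (u v : V) :
    (profLab s u v).Subsingleton := by
  intro t ht t' ht'
  have := card_le_one.mp (hs.card_labelFinset_le_one hα0 hα2 u v)
  exact this t (mem_labelFinset.mpr ht) t' (mem_labelFinset.mpr ht')

theorem IsNash.temporalDist_eq (hα : α < 2) (hs : IsNash α s)
    [DecidableRel (profileGraph s).Adj] (u v : V) :
    temporalDist (profLab s) u v =
      ((if u = v then 0 else if (profileGraph s).Adj u v then 1 else 2 : ℕ) : ℕ∞) := by
  split_ifs with huv hadj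
  · simp [huv, temporalDist_self]
  · exact le_antisymm (temporalDist_le_one huv hadj.2.some_mem) (one_le_temporalDist huv)
  · refine le_antisymm (hs.temporalDist_le_two hα u v) (not_lt.mp fun h => hadj ?_)
    exact ⟨huv, nonempty_of_temporalDist_lt_two huv h⟩

theorem IsNash.card_labelFinset_eq (hα0 : 0 < α) (hα2 : α < 2) (hs : IsNash α s)
    [DecidableRel (profileGraph s).Adj] {u v : V} (huv : u ≠ v) :
    #(labelFinset s u v) = if (profileGraph s).Adj u v then 1 else 0 := by
  split_ifs with hadj
  · obtain ⟨t, ht⟩ := hadj.2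
    exact le_antisymm (hs.card_labelFinset_le_one hα0 hα2 u v)
      (card_pos.mpr ⟨t, mem_labelFinset.mpr ht⟩)
  · exact card_eq_zero.mpr (eq_empty_of_forall_notMem fun t ht =>
      hadj ⟨huv, t, mem_labelFinset.mp ht⟩)

theorem IsNash.two_le_card_inter_neighborFinset (hα0 : 0 < α) (hα2 : α < 2) (hs : IsNash α s)
    [DecidableRel (profileGraph s).Adj] (u v : V) (huv : u ≠ v)
    (hadj : ¬ (profileGraph s).Adj u v) :
    2 ≤ #((profileGraph s).neighborFinset u ∩ (profileGraph s).neighborFinset v) := by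
  have hno : ∀ {x y}, x ≠ y → ¬ (profileGraph s).Adj x y → ¬ (profLab s x y).Nonempty :=
    fun hxy hadj h => hadj ⟨hxy, h⟩
  obtain ⟨w, t₁, t₂, huw, hwv, ht₁, ht₂, ht⟩ := exists_increasing_wedge_of_temporalDist_lt_three
    huv (hno huv hadj) ((hs.temporalDist_le_two hα2 u v).trans_lt (by norm_num))
  obtain ⟨w', t₁', t₂', hvw', hw'u, ht₁', ht₂', ht'⟩ :=
    exists_increasing_wedge_of_temporalDist_lt_three huv.symm (hno huv.symm (fun h => hadj h.symm))
    ((hs.temporalDist_le_two hα2 v u).trans_lt (by norm_num))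
  have hww' : w ≠ w' := by
    rintro rfl
    have h₁ := hs.subsingleton_profLab hα0 hα2 u w ht₁ (profLab_comm s w u ▸ ht₂')
    have h₂ := hs.subsingleton_profLab hα0 hα2 w v ht₂ (profLab_comm s v w ▸ ht₁')
    omega
  refine one_lt_card.mpr ⟨w, ?_, w', ?_, hww'⟩ <;> simp only [mem_inter, mem_neighborFinset]
  · exact ⟨⟨huw, t₁, ht₁⟩, ⟨hwv.symm, t₂, profLab_comm s w v ▸ ht₂⟩⟩
  · exact ⟨⟨hw'u.symm, t₂', profLab_comm s w' u ▸ ht₂'⟩, ⟨hvw', t₁', ht₁'⟩⟩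

theorem IsNash.numLabels_eq (hα0 : 0 < α) (hα2 : α < 2) (hs : IsNash α s)
    [DecidableRel (profileGraph s).Adj] : numLabels s = #(profileGraph s).edgeFinset := by
  have hdeg : ∀ u, ∑ v, (if u = v then 0 else #(labelFinset s u v)) =
      (profileGraph s).degree u := by
    intro u
    rw [← card_neighborFinset_eq_degree, neighborFinset_eq_filter, card_filter]
    refine sum_congr rfl fun v _ => ?_
    by_cases huv : u = v
    · simp [huv]
    · rw [if_neg huv, hs.card_labelFinset_eq hα0 hα2 huv]
  rw [numLabels, sum_congr rfl fun u _ => hdeg u, sum_degrees_eq_twice_card_edges,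
    Nat.mul_div_cancel_left _ two_pos]

theorem IsNash.socialCost_eq (hα0 : 0 < α) (hα2 : α < 2) (hs : IsNash α s)
    [DecidableRel (profileGraph s).Adj] :
    socialCost α s = ENNReal.ofReal (2 * (Fintype.card V : ℝ) * (Fintype.card V - 1) +
      (α - 2) * #(profileGraph s).edgeFinset) := by
  set n : ℝ := (Fintype.card V : ℝ)
  have hrow : ∀ u,
      ((∑ v, (if u = v then 0 else if (profileGraph s).Adj u v then 1 else 2 : ℕ) : ℕ) : ℝ) =
        2 * (n - 1) - (profileGraph s).degree u := by
    intro u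
    have hn : 1 ≤ Fintype.card V := Fintype.card_pos_iff.mpr ⟨u⟩
    rw [eq_sub_iff_add_eq, ← Nat.cast_add, (profileGraph s).sum_ite_adj_add_degree u]
    push_cast [n, Nat.cast_sub hn]
    ring
  have hsum : ∑ u, (2 * (n - 1) - (profileGraph s).degree u) =
      2 * n * (n - 1) - 2 * #(profileGraph s).edgeFinset := by
    rw [sum_sub_distrib, ← Nat.cast_sum, sum_degrees_eq_twice_card_edges]
    simp only [sum_const, card_univ, nsmul_eq_mul, Nat.cast_mul, Nat.cast_ofNat, sub_left_inj, n]
    ring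
  have hdist : ∑ u, ∑ v, (temporalDist (profLab s) u v : ℝ≥0∞) =
      ENNReal.ofReal (2 * n * (n - 1) - 2 * #(profileGraph s).edgeFinset) := by
    rw [← hsum, ENNReal.ofReal_sum_of_nonneg fun u _ => hrow u ▸ Nat.cast_nonneg _]
    refine sum_congr rfl fun u _ => ?_
    rw [← hrow u, ENNReal.ofReal_natCast, Nat.cast_sum]
    simp_rw [hs.temporalDist_eq hα2, ENat.toENNReal_coe]
  have hnonneg : 0 ≤ 2 * n * (n - 1) - 2 * #(profileGraph s).edgeFinset :=
    hsum ▸ sum_nonneg fun u _ => hrow u ▸ Nat.cast_nonneg _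
  rw [socialCost, hs.numLabels_eq hα0 hα2, hdist, ← ENNReal.ofReal_natCast,
    ← ENNReal.ofReal_mul hα0.le, ← ENNReal.ofReal_add (by positivity) hnonneg]
  congr 1
  ring

end Nash

theorem statement_11_general (α : ℝ) (hα1 : 1 ≤ α) (hα2 : α < 2) (n : ℕ)
    (s : Fin n → Finset (Fin n × ℕ)) (hs : IsNash α s) :
    socialCost α s ≤
      ENNReal.ofReal (2 * (n : ℝ) * ((n : ℝ) - 1) + (α - 2) * (2 * (n : ℝ) - 4)) := by
  classical
  have hα0 : 0 < α := by linarith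
  have hE := (profileGraph s).two_mul_card_le_card_edgeFinset_add_four
    (hs.two_le_card_inter_neighborFinset hα0 hα2)
  rw [Fintype.card_fin] at hE
  have hE' : 2 * (n : ℝ) ≤ (profileGraph s).edgeFinset.card + 4 := by exact_mod_cast hE
  rw [hs.socialCost_eq hα0 hα2, Fintype.card_fin]
  exact ENNReal.ofReal_le_ofReal (by nlinarith)

/-- For every atomic cost `1 ≤ α < 2` and every integer `n ≥ 4`, every Nash equilibrium on
`n` players has social cost at most `2n(n-1) + (α-2)(2n-4)`. -/
theorem statement_11 (α : ℝ) (hα1 : 1 ≤ α) (hα2 : α < 2) (n : ℕ) (hn : 4 ≤ n)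
    (s : Fin n → Finset (Fin n × ℕ)) (hs : IsNash α s) :
    socialCost α s ≤
      ENNReal.ofReal (2 * (n : ℝ) * ((n : ℝ) - 1) + (α - 2) * (2 * (n : ℝ) - 4)) :=
  statement_11_general α hα1 hα2 n s hs
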